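/- arXiv:math/9909098 — 3 statements merged into one kernel-verified Lean document; each statement's English description precedes it below -/
import Mathlib

section
/- Let N be a positive integer. If the congruence ABC conjecture holds for N (i.e., for each ε > 0 there exists a constant C_ε such that f((a,b,c),ε) < C_ε for every ABC-solution (a,b,c) with N dividing a·b·c), then the full ABC conjecture holds (i.e., for each ε > 0 there exists a constant C'_ε such that f((a,b,c),ε) < C'_ε for every ABC-solution (a,b,c)). -/
/-!
Given an ABC-solution `(a, b, c)`, put `(v, w) = ((a - b) / 2, c / 2)` if `c` is even and
`(v, w) = (a - b, c)` if `c` is odd, so that `w ^ 2 - v ^ 2` divides `4ab`. For `n = 2m` with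
`m = N φ(N)`, the triple `Θ_n(a, b, c) = (-vⁿ, vⁿ - wⁿ, wⁿ)` is again an ABC-solution, and `N`
divides its product by Euler's theorem, applied prime power by prime power. Since
`wⁿ - vⁿ = (w² - v²) ∑ w^{2i} v^{2(m-1-i)}` and `|v| < w ≤ c`, the radical of that product is at
most `2m c^{n-1} rad(abc)`: one power of `c` less than `wⁿ ≥ (c/2)ⁿ`. Hence a bound on the quality
of `Θ_n(a, b, c)` for `ε' = ε / (n (1 + ε))` bounds the quality of `(a, b, c)` for `ε`; this `ε'`
makes `(1 + ε)(1 - ε'(n - 1)) = 1 + (1 + ε) ε' ≥ 1 + ε'`.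
-/

/-- An ABC-solution: distinct, pairwise coprime integers with a+b+c = 0, a < 0, b < 0. -/
def IsABCSolution (a b c : ℤ) : Prop :=
  a + b + c = 0 ∧ a < 0 ∧ b < 0 ∧
  a ≠ b ∧ b ≠ c ∧ a ≠ c ∧
  IsCoprime a b ∧ IsCoprime b c ∧ IsCoprime a c

/-- The radical of a natural number: the product of its distinct prime factors. -/
def rad (n : ℕ) : ℕ := ∏ p ∈ n.primeFactors, p

/-- The quality function f((a,b,c),ε) = log c − (1+ε)·log rad(|a·b·c|). -/
noncomputable def fABC (a b c : ℤ) (ε : ℝ) : ℝ :=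
  Real.log (c : ℝ) - (1 + ε) * Real.log (rad (a * b * c).natAbs : ℝ)

/-- The operation Θ_n on ABC-solutions, with m = n if c is even and m = 0 otherwise.
The divisions are exact integer divisions. -/
def theta (n : ℕ) (a b c : ℤ) : ℤ × ℤ × ℤ :=
  let m : ℕ := if 2 ∣ c then n else 0
  (-((a - b) ^ n / 2 ^ m), -((c ^ n - (a - b) ^ n) / 2 ^ m), c ^ n / 2 ^ m)

section

open Nat Finset

theorem rad_zero : rad 0 = 1 := by simp [rad]

theorem rad_pos (n : ℕ) : 0 < rad n :=
  prod_pos fun _ hp => (prime_of_mem_primeFactors hp).pos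

theorem rad_le {n : ℕ} (hn : n ≠ 0) : rad n ≤ n :=
  le_of_dvd (pos_of_ne_zero hn) (prod_primeFactors_dvd n)

theorem rad_pow (n : ℕ) {k : ℕ} (hk : k ≠ 0) : rad (n ^ k) = rad n := by
  rw [rad, primeFactors_pow n hk, rad]

theorem rad_prime_pow {p : ℕ} (hp : p.Prime) {k : ℕ} (hk : k ≠ 0) : rad (p ^ k) = p := by
  rw [rad, primeFactors_prime_pow hk hp, prod_singleton]

theorem rad_le_rad_of_dvd {m n : ℕ} (hn : n ≠ 0) (h : m ∣ n) : rad m ≤ rad n :=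
  prod_le_prod_of_subset_of_one_le' (primeFactors_mono h hn)
    fun _ hp _ => (prime_of_mem_primeFactors hp).one_lt.le

theorem rad_mul_le (m n : ℕ) : rad (m * n) ≤ rad m * rad n := by
  rcases eq_or_ne m 0 with rfl | hm
  · rw [zero_mul, rad_zero, one_mul]; exact rad_pos n
  rcases eq_or_ne n 0 with rfl | hn
  · rw [mul_zero, rad_zero, mul_one]; exact rad_pos m
  rw [rad, rad, rad, primeFactors_mul hm hn, ← prod_union_inter]
  exact Nat.le_mul_of_pos_right _ <|
    prod_pos fun _ hp => (prime_of_mem_primeFactors (mem_inter.mp hp).1).pos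

theorem rad_mul_of_coprime {m n : ℕ} (h : m.Coprime n) (hm : m ≠ 0) (hn : n ≠ 0) :
    rad (m * n) = rad m * rad n := by
  rw [rad, primeFactors_mul hm hn, prod_union h.disjoint_primeFactors, rad, rad]

theorem Int.ModEq.pow_totient {x : ℤ} {n : ℕ} (h : IsCoprime x n) : x ^ φ n ≡ 1 [ZMOD n] := by
  have hx : IsUnit (x : ZMod n) := (ZMod.coe_int_isUnit_iff_isCoprime x n).mpr h.symm
  rw [← ZMod.intCast_eq_intCast_iff, Int.cast_pow, ← hx.unit_spec, ← Units.val_pow_eq_pow_val,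
    ZMod.pow_totient, Units.val_one, Int.cast_one]

theorem Int.prime_pow_dvd_pow_or_pow_modEq_one {p k n : ℕ} (hp : p.Prime) (hk : k ≤ n)
    (hφ : φ (p ^ k) ∣ n) (x : ℤ) : ((p ^ k : ℕ) : ℤ) ∣ x ^ n ∨ x ^ n ≡ 1 [ZMOD (p ^ k : ℕ)] := by
  by_cases hpx : (p : ℤ) ∣ x
  · left
    push_cast
    exact (pow_dvd_pow_of_dvd hpx k).trans (pow_dvd_pow x hk)
  · right
    have hcop : IsCoprime x ((p ^ k : ℕ) : ℤ) := by
      push_cast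
      exact (((Nat.prime_iff_prime_int.mp hp).coprime_iff_not_dvd).mpr hpx).symm.pow_right
    obtain ⟨d, rfl⟩ := hφ
    simpa [pow_mul] using (Int.ModEq.pow_totient hcop).pow d

theorem Int.prime_pow_dvd_pow_mul_sub_pow_mul_pow {p k n : ℕ} (hp : p.Prime) (hk : k ≤ n)
    (hφ : φ (p ^ k) ∣ n) (x y : ℤ) : ((p ^ k : ℕ) : ℤ) ∣ x ^ n * (x ^ n - y ^ n) * y ^ n := by
  rcases Int.prime_pow_dvd_pow_or_pow_modEq_one hp hk hφ x with hx | hx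
  · exact (hx.mul_right _).mul_right _
  rcases Int.prime_pow_dvd_pow_or_pow_modEq_one hp hk hφ y with hy | hy
  · exact hy.mul_left _
  · exact (((hy.trans hx.symm).dvd).mul_left _).mul_right _

theorem Int.natCast_dvd_pow_mul_sub_pow_mul_pow {N n : ℕ} (hn : n ≠ 0) (hN : N ∣ n)
    (hφ : φ N ∣ n) (x y : ℤ) : (N : ℤ) ∣ x ^ n * (x ^ n - y ^ n) * y ^ n := by
  induction N using Nat.recOnPosPrimePosCoprime with
  | zero => exact absurd (Nat.eq_zero_of_zero_dvd hN) hn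
  | one => exact one_dvd _
  | prime_pow p k hp _ =>
    have hk : k ≤ n :=
      ((Nat.lt_pow_self hp.one_lt).trans_le (Nat.le_of_dvd (Nat.pos_of_ne_zero hn) hN)).le
    exact Int.prime_pow_dvd_pow_mul_sub_pow_mul_pow hp hk hφ x y
  | coprime a b _ _ hab iha ihb =>
    rw [Nat.totient_mul hab] at hφ
    rw [Nat.cast_mul]
    exact (Nat.isCoprime_iff_coprime.mpr hab).mul_dvd
      (iha (dvd_of_mul_right_dvd hN) (dvd_of_mul_right_dvd hφ))
      (ihb (dvd_of_mul_left_dvd hN) (dvd_of_mul_left_dvd hφ))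

theorem rad_pow_sub_pow_le {X Y : ℕ} (hXY : X < Y) {m : ℕ} (hm : m ≠ 0) :
    rad (Y ^ m - X ^ m) ≤ m * Y ^ (m - 1) * rad (Y - X) := by
  set q := ∑ i ∈ range m, X ^ i * Y ^ (m - 1 - i)
  have hq : q * (Y - X) = Y ^ m - X ^ m := geom_sum₂_mul_of_le hXY.le m
  have hq0 : q ≠ 0 := by
    intro h
    rw [h, zero_mul, eq_comm, Nat.sub_eq_zero_iff_le] at hq
    exact (Nat.pow_lt_pow_left hXY hm).not_ge hq
  have hq_le : q ≤ m * Y ^ (m - 1) := by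
    calc q ≤ ∑ _i ∈ range m, Y ^ (m - 1) := by
          refine sum_le_sum fun i hi => ?_
          calc X ^ i * Y ^ (m - 1 - i) ≤ Y ^ i * Y ^ (m - 1 - i) := by gcongr
            _ = Y ^ (m - 1) := by rw [← pow_add]; congr 1; have := mem_range.mp hi; omega
      _ = m * Y ^ (m - 1) := by rw [sum_const, card_range, smul_eq_mul]
  calc rad (Y ^ m - X ^ m) ≤ rad q * rad (Y - X) := hq ▸ rad_mul_le q (Y - X)
    _ ≤ m * Y ^ (m - 1) * rad (Y - X) := by gcongr; exact (rad_le hq0).trans hq_le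

theorem rad_pow_mul_sub_pow_mul_pow_le {x y : ℕ} (hx : x ≠ 0) (hxy : x < y) {m : ℕ} (hm : m ≠ 0) :
    rad (x ^ (2 * m) * (y ^ (2 * m) - x ^ (2 * m)) * y ^ (2 * m)) ≤
      m * y ^ (2 * m - 1) * rad (y ^ 2 - x ^ 2) * rad y := by
  have h2m : 2 * m ≠ 0 := by omega
  have hsub : rad (y ^ (2 * m) - x ^ (2 * m)) ≤ m * (y ^ 2) ^ (m - 1) * rad (y ^ 2 - x ^ 2) := by
    simpa only [pow_mul] using rad_pow_sub_pow_le (Nat.pow_lt_pow_left hxy two_ne_zero) hm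
  have hxy' : x * (y ^ 2) ^ (m - 1) ≤ y ^ (2 * m - 1) := by
    rw [← pow_mul, show 2 * m - 1 = 2 * (m - 1) + 1 by omega, pow_succ']
    gcongr
  calc rad (x ^ (2 * m) * (y ^ (2 * m) - x ^ (2 * m)) * y ^ (2 * m))
      ≤ rad (x ^ (2 * m)) * rad (y ^ (2 * m) - x ^ (2 * m)) * rad (y ^ (2 * m)) :=
        (rad_mul_le _ _).trans (Nat.mul_le_mul_right _ (rad_mul_le _ _))
    _ ≤ x * (m * (y ^ 2) ^ (m - 1) * rad (y ^ 2 - x ^ 2)) * rad y := by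
        rw [rad_pow x h2m, rad_pow y h2m]
        gcongr
        exact rad_le hx
    _ ≤ m * y ^ (2 * m - 1) * rad (y ^ 2 - x ^ 2) * rad y := by
        calc _ = m * (x * (y ^ 2) ^ (m - 1)) * rad (y ^ 2 - x ^ 2) * rad y := by ring
          _ ≤ _ := by gcongr

theorem rad_natAbs_neg_pow_mul_sub_pow_mul_pow_le {v w : ℤ} (hv : v ≠ 0) (hvw : v ^ 2 < w ^ 2)
    {m : ℕ} (hm : m ≠ 0) :
    rad (-v ^ (2 * m) * (v ^ (2 * m) - w ^ (2 * m)) * w ^ (2 * m)).natAbs ≤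
      m * w.natAbs ^ (2 * m - 1) * rad (w ^ 2 - v ^ 2).natAbs * rad w.natAbs := by
  have hxy : v.natAbs < w.natAbs := Int.natAbs_lt_iff_sq_lt.mpr hvw
  have hxy2 : v.natAbs ^ 2 ≤ w.natAbs ^ 2 := Nat.pow_le_pow_left hxy.le 2
  have hxym : v.natAbs ^ (2 * m) ≤ w.natAbs ^ (2 * m) := Nat.pow_le_pow_left hxy.le _
  have hprod : -v ^ (2 * m) * (v ^ (2 * m) - w ^ (2 * m)) * w ^ (2 * m) =
      ((v.natAbs ^ (2 * m) * (w.natAbs ^ (2 * m) - v.natAbs ^ (2 * m)) * w.natAbs ^ (2 * m) : ℕ) :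
        ℤ) := by
    push_cast [Nat.cast_sub hxym]
    simp only [pow_mul, sq_abs]
    ring
  have hdiff : w ^ 2 - v ^ 2 = ((w.natAbs ^ 2 - v.natAbs ^ 2 : ℕ) : ℤ) := by
    push_cast [Nat.cast_sub hxy2]
    simp only [sq_abs]
  rw [hprod, hdiff, Int.natAbs_natCast, Int.natAbs_natCast]
  exact rad_pow_mul_sub_pow_mul_pow_le (Int.natAbs_ne_zero.mpr hv) hxy hm

theorem isABCSolution_neg_sub {x y : ℤ} (hx : 0 < x) (hxy : x < y) (hy : y ≠ 2 * x)
    (h : IsCoprime x y) : IsABCSolution (-x) (x - y) y := by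
  obtain ⟨u, v, huv⟩ := h
  refine ⟨by ring, by omega, by omega, by omega, by omega, by omega,
    ⟨-(u + v), -v, by linear_combination huv⟩, ⟨u, u + v, by linear_combination huv⟩,
    ⟨-u, v, by linear_combination huv⟩⟩

theorem isABCSolution_neg_pow {v w : ℤ} (h : IsCoprime v w) (hv : v ≠ 0) (hvw : v ^ 2 < w ^ 2)
    {m : ℕ} (hm : m ≠ 0) :
    IsABCSolution (-v ^ (2 * m)) (v ^ (2 * m) - w ^ (2 * m)) (w ^ (2 * m)) := by
  have hcop : IsCoprime (v ^ (2 * m)) (w ^ (2 * m)) := h.pow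
  have hpos : 0 < v ^ (2 * m) := (even_two_mul m).pow_pos hv
  refine isABCSolution_neg_sub hpos ?_ ?_ hcop
  · simpa only [pow_mul] using pow_lt_pow_left₀ hvw (sq_nonneg v) hm
  · intro htwo
    have hone : v ^ (2 * m) = 1 := by
      have := Int.isUnit_iff.mp (hcop.isUnit_of_dvd' dvd_rfl (Dvd.intro_left 2 htwo.symm))
      omega
    rw [hone, mul_one, mul_comm, pow_mul] at htwo
    exact Int.sq_ne_two_mod_four (w ^ m) (by rw [← sq, htwo]; norm_num)

theorem IsABCSolution.exists_sq_sub_sq {a b c : ℤ} (h : IsABCSolution a b c) :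
    ∃ v w : ℤ, IsCoprime v w ∧ v ≠ 0 ∧ v ^ 2 < w ^ 2 ∧ 0 < w ∧ w ∣ c ∧ c ≤ 2 * w ∧
      w ^ 2 - v ^ 2 ∣ 4 * (a * b) := by
  obtain ⟨hsum, ha, hb, hab, -, -, ⟨x, y, hxy⟩, -, -⟩ := h
  have hab_pos : 0 < a * b := mul_pos_of_neg_of_neg ha hb
  rcases Int.even_or_odd c with ⟨l, hl⟩ | ⟨l, hl⟩
  · refine ⟨a + l, l, ⟨x - y, -(x + y), by linear_combination hxy - y * hsum + y * hl⟩,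
      by omega, by nlinarith, by omega, ⟨2, by omega⟩, by omega, ⟨4, by nlinarith⟩⟩
  · refine ⟨a - b, c, ⟨-l * (x - y), 1 + l * (x + y),
        by linear_combination (-2 * l) * hxy + l * (x + y) * hsum + hl⟩,
      sub_ne_zero.mpr hab, by nlinarith, by omega, dvd_rfl, by omega, ⟨1, by nlinarith⟩⟩

theorem IsABCSolution.exists_neg_pow_solution {a b c : ℤ} (h : IsABCSolution a b c) {m : ℕ}
    (hm : m ≠ 0) :
    ∃ v w : ℤ, IsABCSolution (-v ^ (2 * m)) (v ^ (2 * m) - w ^ (2 * m)) (w ^ (2 * m)) ∧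
      c ≤ 2 * w ∧
      rad (-v ^ (2 * m) * (v ^ (2 * m) - w ^ (2 * m)) * w ^ (2 * m)).natAbs ≤
        2 * m * c.natAbs ^ (2 * m - 1) * rad (a * b * c).natAbs := by
  obtain ⟨v, w, hvw, hv, hlt, hw, hwc, hcw, hdiff⟩ := h.exists_sq_sub_sq
  refine ⟨v, w, isABCSolution_neg_pow hvw hv hlt hm, hcw, ?_⟩
  obtain ⟨hsum, ha, hb, -, -, -, -, hbc, hac⟩ := h
  have hab0 : (a * b).natAbs ≠ 0 := Int.natAbs_ne_zero.mpr (mul_pos_of_neg_of_neg ha hb).ne'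
  have hc0 : c.natAbs ≠ 0 := by omega
  have hw_le : w.natAbs ≤ c.natAbs := Int.natAbs_le_of_dvd_ne_zero hwc (by omega)
  have hrad_diff : rad (w ^ 2 - v ^ 2).natAbs ≤ 2 * rad (a * b).natAbs :=
    calc rad (w ^ 2 - v ^ 2).natAbs ≤ rad (4 * (a * b).natAbs) :=
          rad_le_rad_of_dvd (by omega)
            (by simpa [Int.natAbs_mul] using Int.natAbs_dvd_natAbs.mpr hdiff)
      _ ≤ rad 4 * rad (a * b).natAbs := rad_mul_le _ _
      _ = 2 * rad (a * b).natAbs := by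
          rw [show 4 = 2 ^ 2 by rfl, rad_prime_pow Nat.prime_two two_ne_zero]
  have hrad_w : rad w.natAbs ≤ rad c.natAbs := rad_le_rad_of_dvd hc0 (Int.natAbs_dvd_natAbs.mpr hwc)
  have hrad_abc : rad (a * b * c).natAbs = rad (a * b).natAbs * rad c.natAbs := by
    rw [Int.natAbs_mul (a * b)]
    exact rad_mul_of_coprime (Int.isCoprime_iff_gcd_eq_one.mp (hac.mul_left hbc)) hab0 hc0
  calc _ ≤ m * w.natAbs ^ (2 * m - 1) * rad (w ^ 2 - v ^ 2).natAbs * rad w.natAbs :=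
        rad_natAbs_neg_pow_mul_sub_pow_mul_pow_le hv hlt hm
    _ ≤ m * c.natAbs ^ (2 * m - 1) * (2 * rad (a * b).natAbs) * rad c.natAbs := by gcongr
    _ = 2 * m * c.natAbs ^ (2 * m - 1) * rad (a * b * c).natAbs := by rw [hrad_abc]; ring

end

theorem exists_log_sub_mul_log_lt {n : ℕ} (hn : n ≠ 0) {ε : ℝ} (hε : 0 < ε) {D : ℝ} (hD : 0 < D)
    (K : ℝ) : ∃ C' : ℝ, ∀ c C R R' : ℝ, 0 < c → 1 ≤ R → 0 < R' → c ^ n ≤ 2 ^ n * C →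
      R' ≤ D * c ^ (n - 1) * R → Real.log C - (1 + ε / (n * (1 + ε))) * Real.log R' < K →
      Real.log c - (1 + ε) * Real.log R < C' := by
  set ε' := ε / (n * (1 + ε))
  have hε' : 0 < ε' := by positivity
  have hε'n : ε' * (n * (1 + ε)) = ε := div_mul_cancel₀ ε (by positivity)
  clear_value ε'
  set δ := 1 - ε' * (n - 1)
  have hδε : (1 + ε) * δ = 1 + (1 + ε) * ε' := by linear_combination -hε'n
  have hδ : 0 < δ := pos_of_mul_pos_right (hδε ▸ by positivity) (by positivity : (0 : ℝ) ≤ 1 + ε)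
  refine ⟨(K + n * Real.log 2 + (1 + ε') * Real.log D) / δ,
    fun c C R R' hc hR hR' hcC hR'R hK => ?_⟩
  have hC : 0 < C := pos_of_mul_pos_right ((pow_pos hc n).trans_le hcC) (by positivity)
  have hlogC : n * Real.log c ≤ n * Real.log 2 + Real.log C := by
    have := Real.log_le_log (pow_pos hc n) hcC
    rwa [Real.log_mul (by positivity) hC.ne', Real.log_pow, Real.log_pow] at this
  have hlogR' : Real.log R' ≤ Real.log D + (n - 1) * Real.log c + Real.log R := by
    have := Real.log_le_log hR' hR'R
    rwa [Real.log_mul (by positivity) (by positivity), Real.log_mul hD.ne' (by positivity),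
      Real.log_pow, Nat.cast_pred (Nat.pos_of_ne_zero hn)] at this
  have hρ : 0 ≤ Real.log R := Real.log_nonneg hR
  rw [lt_div_iff₀ hδ]
  nlinarith [mul_le_mul_of_nonneg_left hlogR' (by positivity : (0 : ℝ) ≤ 1 + ε'),
    mul_nonneg (mul_nonneg hε.le hε'.le) hρ]

/-- the congruence ABC conjecture for any positive integer N
implies the full ABC conjecture. -/
theorem congruence_ABC_implies_ABC (N : ℕ) (hN : 0 < N)
    (hcong : ∀ ε : ℝ, 0 < ε → ∃ C : ℝ, ∀ a b c : ℤ,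
      IsABCSolution a b c → (N : ℤ) ∣ a * b * c → fABC a b c ε < C) :
    ∀ ε : ℝ, 0 < ε → ∃ C' : ℝ, ∀ a b c : ℤ,
      IsABCSolution a b c → fABC a b c ε < C' := by
  intro ε hε
  set m := N * N.totient
  have hm : m ≠ 0 := (Nat.mul_pos hN (Nat.totient_pos.mpr hN)).ne'
  obtain ⟨K, hK⟩ := hcong (ε / ((2 * m : ℕ) * (1 + ε))) (by positivity)
  obtain ⟨C', hC'⟩ := exists_log_sub_mul_log_lt (by omega : 2 * m ≠ 0) hε
    (by positivity : (0 : ℝ) < (2 * m : ℕ)) K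
  refine ⟨C', fun a b c h => ?_⟩
  have hc : 0 < c := by obtain ⟨_, _, _, _⟩ := h; omega
  obtain ⟨v, w, hsol, hcw, hrad⟩ := h.exists_neg_pow_solution hm
  have hdvd : (N : ℤ) ∣ -v ^ (2 * m) * (v ^ (2 * m) - w ^ (2 * m)) * w ^ (2 * m) := by
    simpa only [neg_mul, dvd_neg] using Int.natCast_dvd_pow_mul_sub_pow_mul_pow (by omega)
      ((dvd_mul_right N _).mul_left 2) ((dvd_mul_left _ N).mul_left 2) v w
  refine hC' c ((w ^ (2 * m) : ℤ) : ℝ) _ _ (by exact_mod_cast hc) (by exact_mod_cast rad_pos _)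
    (by exact_mod_cast rad_pos _) ?_ ?_ (hK _ _ _ hsol hdvd)
  · rw [Int.cast_pow, ← mul_pow]
    exact pow_le_pow_left₀ (by exact_mod_cast hc.le) (by exact_mod_cast hcw) _
  · have hcR : (c : ℝ) = (c.natAbs : ℝ) := by rw [Nat.cast_natAbs, abs_of_pos hc]
    rw [hcR]
    exact_mod_cast hrad
end

section
/- Let n ≥ 2 be an even integer and let (a,b,c) be an ABC-solution. Then Θ_n(a,b,c) = (A,B,C) is again an ABC-solution: A, B, C are integers (in particular, when c is even, 2^n divides both (a−b)^n and c^n), they are distinct and pairwise coprime, A + B + C = 0, A < 0, B < 0, and C > 0. -/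
lemma aux_ne_two_mul (n : ℕ) (hn : 2 ≤ n) (hev : Even n) (x y : ℤ)
    (hx : x ≠ 0) (hy : 0 < y) (hco : IsCoprime x y) : y ^ n ≠ 2 * x ^ n := by
  intro he
  have hcp : IsCoprime (x ^ n) (y ^ n) := hco.pow
  have hu : IsUnit (x ^ n) := hcp.isUnit_of_dvd' dvd_rfl ⟨2, by linarith⟩
  have hxp : 0 < x ^ n := hev.pow_pos hx
  have h1 : x ^ n = 1 := by
    rcases Int.isUnit_iff.mp hu with h | h
    · exact h
    · omega
  have hy2 : y ^ 2 ≤ y ^ n := pow_le_pow_right₀ (by linarith) hn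
  have hyn : y ^ n = 2 := by omega
  have : y = 1 := by nlinarith
  subst this
  simp at hyn

lemma aux_core (n : ℕ) (hn : 2 ≤ n) (hev : Even n) (x y : ℤ)
    (hx : x ≠ 0) (hxy : |x| < y) (hco : IsCoprime x y) :
    IsABCSolution (-(x ^ n)) (-(y ^ n - x ^ n)) (y ^ n) := by
  have hy : 0 < y := lt_of_le_of_lt (abs_nonneg x) hxy
  have hxp : 0 < x ^ n := hev.pow_pos hx
  have hlt : x ^ n < y ^ n := by
    calc x ^ n = |x| ^ n := (hev.pow_abs x).symm
    _ < y ^ n := pow_lt_pow_left₀ hxy (abs_nonneg x) (by omega)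
  have hne2 : y ^ n ≠ 2 * x ^ n := aux_ne_two_mul n hn hev x y hx hy hco
  have hcp : IsCoprime (x ^ n) (y ^ n) := hco.pow
  refine ⟨by ring, by linarith, by linarith, ?_, ?_, ?_, ?_, ?_, ?_⟩
  · intro hAB
    apply hne2
    have : x ^ n = y ^ n - x ^ n := neg_inj.mp hAB
    linarith
  · intro hBC; have : -(y ^ n - x ^ n) < y ^ n := by linarith
    omega
  · intro hAC; have : -(x ^ n) < y ^ n := by linarith
    omega
  · have h1 : IsCoprime (x ^ n) (y ^ n - x ^ n) := by
      have := hcp.add_mul_left_right (-1)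
      simpa [mul_neg_one, ← sub_eq_add_neg] using this
    exact h1.neg_left.neg_right
  · have h1 : IsCoprime (x ^ n + y ^ n * (-1)) (y ^ n) := hcp.add_mul_left_left (-1)
    have h2 : x ^ n + y ^ n * (-1) = -(y ^ n - x ^ n) := by ring
    rwa [h2] at h1
  · exact hcp.neg_left

/-- Θ_n(a,b,c) is again an ABC-solution (and when c is even,
2^n divides both (a−b)^n and c^n, so the divisions defining Θ_n are exact). -/
theorem theta_isABCSolution (n : ℕ) (hn : 2 ≤ n) (hev : Even n)
    (a b c : ℤ) (h : IsABCSolution a b c) :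
    (2 ∣ c → (2 : ℤ) ^ n ∣ (a - b) ^ n ∧ (2 : ℤ) ^ n ∣ c ^ n) ∧
    IsABCSolution (theta n a b c).1 (theta n a b c).2.1 (theta n a b c).2.2 := by
  obtain ⟨hsum, ha, hb, hab, hbc, hac, cab, cbc, cac⟩ := h
  have hc : 0 < c := by linarith
  have habs : |a - b| < c := abs_lt.mpr ⟨by linarith, by linarith⟩
  by_cases h2 : (2 : ℤ) ∣ c
  · obtain ⟨v, hv⟩ := h2
    have h2c : (2 : ℤ) ∣ c := ⟨v, hv⟩
    have h2ab : (2 : ℤ) ∣ a - b := by omega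
    obtain ⟨u, hu⟩ := h2ab
    constructor
    · exact fun _ => ⟨pow_dvd_pow_of_dvd ⟨u, hu⟩ n, pow_dvd_pow_of_dvd h2c n⟩
    · have hthe : theta n a b c = (-(u ^ n), -(v ^ n - u ^ n), v ^ n) := by
        simp only [theta, if_pos h2c]
        rw [hu, hv, mul_pow, mul_pow,
          Int.mul_ediv_cancel_left _ (pow_ne_zero n (two_ne_zero)),
          show (2 : ℤ) ^ n * v ^ n - 2 ^ n * u ^ n = 2 ^ n * (v ^ n - u ^ n) by ring,
          Int.mul_ediv_cancel_left _ (pow_ne_zero n (two_ne_zero)),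
          Int.mul_ediv_cancel_left _ (pow_ne_zero n (two_ne_zero))]
      rw [hthe]
      apply aux_core n hn hev u v
      · omega
      · have h1 : |(2 : ℤ) * u| < 2 * v := by rw [← hu, ← hv]; exact habs
        have h2' : |(2 : ℤ) * u| = 2 * |u| := by rw [abs_mul]; norm_num
        linarith [h2'.symm.trans_lt h1]
      · have hav : IsCoprime a v := by
          rw [hv] at cac
          exact cac.of_mul_right_right
        have huv : u = a + v := by omega
        rw [huv]
        simpa using hav.add_mul_left_left 1
  · have hthe : theta n a b c = (-(a - b) ^ n, -(c ^ n - (a - b) ^ n), c ^ n) := by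
      simp [theta, if_neg h2]
    refine ⟨fun hc2 => absurd hc2 h2, ?_⟩
    rw [hthe]
    have hco : IsCoprime (a - b) c := by
      have hodd : IsCoprime (2 : ℤ) c := ⟨-(c / 2), 1, by omega⟩
      have h2a : IsCoprime (2 * a) c := hodd.mul_left cac
      have heq : a - b = 2 * a + c * 1 := by linarith
      rw [heq]
      exact h2a.add_mul_left_left 1
    exact aux_core n hn hev (a - b) c (sub_ne_zero.mpr hab) habs hco
end

section
/- Let N be a positive integer such that n = φ(N) is even (φ is Euler's totient function), and let (a,b,c) be an ABC-solution. If (A,B,C) = Θ_n(a,b,c), then N divides A·B·C. -/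
/-!
Modulo a prime power `p ^ k` dividing `N`, every `φ N`-th power is `0` or `1`: for a unit this is
Euler's theorem, since `φ (p ^ k) ∣ φ N`, and for a multiple of `p` it holds because
`k ≤ φ (p ^ k) ≤ φ N`. Hence `N ∣ x ^ n * (y ^ n - x ^ n) * y ^ n` for `n = φ N` and all integers
`x`, `y`. The product of the entries of `Θ_n(a, b, c)` has this shape with
`(x, y) = (a - b, c)`, or `((a - b) / 2, c / 2)` when `c` is even; that halving is exact because
`a - b ≡ a + b = -c` modulo `2`.
-/

open Nat

theorem Nat.le_totient_prime_pow {p : ℕ} (hp : p.Prime) (k : ℕ) : k ≤ φ (p ^ k) := by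
  rcases k with _ | k
  · exact Nat.zero_le _
  rw [Nat.totient_prime_pow_succ hp]
  calc k + 1 ≤ p ^ k := Nat.lt_pow_self hp.one_lt
    _ ≤ p ^ k * (p - 1) := Nat.le_mul_of_pos_right _ (by have := hp.two_le; omega)

theorem ZMod.pow_totient_of_isUnit {M : ℕ} {z : ZMod M} (hz : IsUnit z) : z ^ φ M = 1 := by
  obtain ⟨u, rfl⟩ := hz
  rw [← Units.val_pow_eq_pow_val, ZMod.pow_totient, Units.val_one]

theorem ZMod.intCast_pow_eq_zero_or_one {p k n : ℕ} (hp : p.Prime) (hkn : k ≤ n)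
    (hφ : φ (p ^ k) ∣ n) (z : ℤ) :
    (z : ZMod (p ^ k)) ^ n = 0 ∨ (z : ZMod (p ^ k)) ^ n = 1 := by
  by_cases hpz : (p : ℤ) ∣ z
  · left
    rw [← Int.cast_pow, ZMod.intCast_zmod_eq_zero_iff_dvd, Nat.cast_pow]
    exact (pow_dvd_pow_of_dvd hpz k).trans (pow_dvd_pow z hkn)
  · right
    have hunit : IsUnit (z : ZMod (p ^ k)) := by
      rw [ZMod.coe_int_isUnit_iff_isCoprime, Nat.cast_pow]
      exact ((Nat.prime_iff_prime_int.mp hp).coprime_iff_not_dvd.mpr hpz).pow_left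
    obtain ⟨e, rfl⟩ := hφ
    rw [pow_mul, ZMod.pow_totient_of_isUnit hunit, one_pow]

theorem Int.natCast_dvd_pow_totient_mul_sub_mul_pow (N : ℕ) (x y : ℤ) :
    (N : ℤ) ∣ x ^ φ N * (y ^ φ N - x ^ φ N) * y ^ φ N := by
  rcases eq_or_ne N 0 with rfl | hN
  · simp
  rw [Int.natCast_dvd, Nat.dvd_iff_prime_pow_dvd_dvd]
  intro p k hp hpk
  have hφ : φ (p ^ k) ∣ φ N := Nat.totient_dvd_of_dvd hpk
  have hkn : k ≤ φ N :=
    (Nat.le_totient_prime_pow hp k).trans (Nat.le_of_dvd (Nat.totient_pos.mpr hN.bot_lt) hφ)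
  rw [← Int.natCast_dvd, ← ZMod.intCast_zmod_eq_zero_iff_dvd]
  push_cast
  rcases ZMod.intCast_pow_eq_zero_or_one hp hkn hφ x with hx | hx <;>
    rcases ZMod.intCast_pow_eq_zero_or_one hp hkn hφ y with hy | hy <;>
    simp [hx, hy]

theorem exists_theta_prod_eq (n : ℕ) {a b c : ℤ} (habc : a + b + c = 0) :
    ∃ x y : ℤ, (theta n a b c).1 * (theta n a b c).2.1 * (theta n a b c).2.2 =
      x ^ n * (y ^ n - x ^ n) * y ^ n := by
  simp only [theta]
  split_ifs with hc
  · obtain ⟨e, rfl⟩ := hc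
    obtain ⟨d, hd⟩ : 2 ∣ a - b := by omega
    have h2n : (2 : ℤ) ^ n ≠ 0 := by positivity
    refine ⟨d, e, ?_⟩
    rw [hd, mul_pow, mul_pow, ← mul_sub, Int.mul_ediv_cancel_left _ h2n,
      Int.mul_ediv_cancel_left _ h2n, Int.mul_ediv_cancel_left _ h2n]
    ring
  · exact ⟨a - b, c, by simp only [pow_zero, Int.ediv_one]; ring⟩

theorem N_dvd_theta_general (N : ℕ)
    (a b c : ℤ) (h : IsABCSolution a b c) :
    (N : ℤ) ∣ (theta N.totient a b c).1 * (theta N.totient a b c).2.1 *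
      (theta N.totient a b c).2.2 := by
  obtain ⟨x, y, hxy⟩ := exists_theta_prod_eq N.totient h.1
  rw [hxy]
  exact Int.natCast_dvd_pow_totient_mul_sub_mul_pow N x y

/-- if n = φ(N) is even and (A,B,C) = Θ_n(a,b,c), then N ∣ A·B·C. -/
theorem N_dvd_theta (N : ℕ) (hN : 0 < N) (hev : Even N.totient)
    (a b c : ℤ) (h : IsABCSolution a b c) :
    (N : ℤ) ∣ (theta N.totient a b c).1 * (theta N.totient a b c).2.1 *
      (theta N.totient a b c).2.2 :=
  N_dvd_theta_general N a b c h
end
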